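/- arXiv:0807.2810 — 6 statements merged into one kernel-verified Lean document; each statement's English description precedes it below -/
import Mathlib

section
/- For every bounded sequence (x_n) in a real Banach space X, δ(x_n) ≥ 2 ε_J(x_n), where δ(x_n) = sup_{x* in the closed unit ball of X*} (limsup x*(x_n) − liminf x*(x_n)) and ε_J is the James constant. -/
open Filter Topology

variable {X : Type*} [NormedAddCommGroup X] [NormedSpace ℝ X]

/-- James constant of a bounded sequence. -/
noncomputable def epsJ (x : ℕ → X) : ℝ :=
  ⨆ m : ℕ, sInf {r : ℝ | ∃ α : ℕ →₀ ℝ, (∀ n < m, α n = 0) ∧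
    (∑ n ∈ α.support, |α n|) = 1 ∧ r = ‖∑ n ∈ α.support, α n • x n‖}

/-- Oscillation modulus with respect to a set of functionals. -/
noncomputable def deltaD (D : Set (X →L[ℝ] ℝ)) (x : ℕ → X) : ℝ :=
  sSup {r : ℝ | ∃ f ∈ D, r = Filter.limsup (fun n => f (x n)) Filter.atTop
    - Filter.liminf (fun n => f (x n)) Filter.atTop}

/-- Oscillation modulus with respect to the dual unit ball. -/
noncomputable def delta (x : ℕ → X) : ℝ := deltaD {f : X →L[ℝ] ℝ | ‖f‖ ≤ 1} x

/-- Hagler-Johnson modulus. -/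
noncomputable def deltaHJ (x : ℕ → X) : ℝ :=
  sSup {r : ℝ | ∃ f : X →L[ℝ] ℝ, ‖f‖ ≤ 1 ∧
    r = Filter.limsup (fun n => f (x n)) Filter.atTop}

/-- Sup of James constants over subsequences. -/
noncomputable def tildeEpsJ (x : ℕ → X) : ℝ :=
  sSup {r : ℝ | ∃ φ : ℕ → ℕ, StrictMono φ ∧ r = epsJ (x ∘ φ)}

/-- Inf of δ over subsequences. -/
noncomputable def tildeDelta (x : ℕ → X) : ℝ :=
  sInf {r : ℝ | ∃ φ : ℕ → ℕ, StrictMono φ ∧ r = delta (x ∘ φ)}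

/-- `B` is a boundary: a subset of the dual unit sphere on which every element
of `X` attains its norm. -/
def IsBoundary (B : Set (X →L[ℝ] ℝ)) : Prop :=
  (∀ b ∈ B, ‖b‖ = 1) ∧ ∀ x : X, ∃ b ∈ B, b x = ‖x‖

/-- `x` is equivalent to the canonical `ℓ¹` basis (lower estimate; the upper
estimate follows from boundedness). -/
def IsL1Seq (x : ℕ → X) : Prop :=
  ∃ c > (0:ℝ), ∀ α : ℕ →₀ ℝ,
    c * (∑ n ∈ α.support, |α n|) ≤ ‖∑ n ∈ α.support, α n • x n‖

/-- norm-bounded sequence -/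
def BoundedSeq (x : ℕ → X) : Prop := ∃ C : ℝ, ∀ n, ‖x n‖ ≤ C

/-- weakly Cauchy sequence -/
def WeaklyCauchy (x : ℕ → X) : Prop :=
  ∀ f : X →L[ℝ] ℝ, ∃ l : ℝ, Filter.Tendsto (fun n => f (x n)) Filter.atTop (nhds l)

/-- the topology `σ(X,B)` of pointwise convergence on `B` -/
def Btop (B : Set (X →L[ℝ] ℝ)) : TopologicalSpace X :=
  TopologicalSpace.induced (fun x : X => fun b : B => (b : X →L[ℝ] ℝ) x) Pi.topologicalSpace

/-- the weak topology `σ(X,X*)` -/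
noncomputable def weakTop (X : Type*) [NormedAddCommGroup X] [NormedSpace ℝ X] :
    TopologicalSpace X :=
  TopologicalSpace.induced (fun x : X => fun f : X →L[ℝ] ℝ => f x) Pi.topologicalSpace

/-! Test the sequence against the alternating combinations
`∑ α n • x n` with `α n ≥ 0` for even `n` and `α n ≤ 0` for odd `n`. For each tail these form a
convex set all of whose points have norm at least the tail infimum `d` in the definition of `ε_J`,
so Hahn–Banach gives a norm-one functional `g` that is `≥ d` on all of them. Applied to
`(x p - x q) / 2` with `p` even and `q` odd this says `g (x p) ≥ g (x q) + 2 d`, so the oscillation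
of `g ∘ x` is at least `2 d`. -/

theorem Convex.exists_norm_le_one_and_le_apply {E : Type*} [NormedAddCommGroup E]
    [NormedSpace ℝ E] {K : Set E} (hK : Convex ℝ K) {d : ℝ} (hd : ∀ w ∈ K, d ≤ ‖w‖) :
    ∃ g : E →L[ℝ] ℝ, ‖g‖ ≤ 1 ∧ ∀ w ∈ K, d ≤ g w := by
  rcases le_or_gt d 0 with hd0 | hd0
  · exact ⟨0, by simp, fun _ _ => by simpa using hd0⟩
  have hdisj : Disjoint (Metric.ball (0 : E) d) K :=
    Set.disjoint_left.2 fun w hw hwK => (mem_ball_zero_iff.1 hw).not_ge (hd w hwK)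
  obtain ⟨f, c, hball, hfK⟩ :=
    geometric_hahn_banach_open (convex_ball 0 d) Metric.isOpen_ball hK hdisj
  have hc : 0 < c := by simpa using hball 0 (Metric.mem_ball_self hd0)
  have hpolar : c⁻¹ • f ∈ StrongDual.polar ℝ (Metric.ball (0 : E) d) := by
    refine (StrongDual.mem_polar_iff ℝ _).2 fun z hz => ?_
    have hneg := hball (-z) (by simpa using hz)
    rw [map_neg] at hneg
    rw [smul_apply, norm_smul, norm_inv, Real.norm_of_nonneg hc.le,
      inv_mul_le_one₀ hc, Real.norm_eq_abs, abs_le]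
    exact ⟨by linarith, (hball z hz).le⟩
  rw [NormedSpace.polar_ball hd0, mem_closedBall_zero_iff] at hpolar
  refine ⟨d • c⁻¹ • f, ?_, fun w hw => ?_⟩
  · calc ‖d • c⁻¹ • f‖ = d * ‖c⁻¹ • f‖ := by rw [norm_smul, Real.norm_of_nonneg hd0.le]
      _ ≤ d * d⁻¹ := by gcongr
      _ = 1 := mul_inv_cancel₀ hd0.ne'
  · calc d = d * c⁻¹ * c := by field_simp
      _ ≤ d * c⁻¹ * f w := by gcongr; exact hfK w hw
      _ = (d • c⁻¹ • f) w := by simp [mul_assoc]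

theorem le_limsup_sub_liminf_of_frequently {ι : Type*} {l : Filter ι} {u : ι → ℝ}
    {s t : Set ι} {c : ℝ} (hs : ∃ᶠ i in l, i ∈ s) (ht : ∃ᶠ i in l, i ∈ t)
    (hst : ∀ p ∈ s, ∀ q ∈ t, u q + c ≤ u p)
    (hle : IsBoundedUnder (· ≤ ·) l u) (hge : IsBoundedUnder (· ≥ ·) l u) :
    c ≤ limsup u l - liminf u l := by
  have hlow : ∀ p ∈ s, liminf u l + c ≤ u p := fun p hp =>
    le_sub_iff_add_le.1 <| liminf_le_of_frequently_le
      (ht.mono fun q hq => le_sub_iff_add_le.2 (hst p hp q hq)) hge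
  have := le_limsup_of_frequently_le (hs.mono hlow) hle
  linarith

theorem limsup_sub_liminf_le_of_abs_le {ι : Type*} {l : Filter ι} [l.NeBot] {u : ι → ℝ}
    {C : ℝ} (hC : ∀ i, |u i| ≤ C) : limsup u l - liminf u l ≤ 2 * C := by
  have hup : limsup u l ≤ C :=
    limsup_le_of_le (isCoboundedUnder_le_of_le l fun i => (abs_le.1 (hC i)).1)
      (Eventually.of_forall fun i => (abs_le.1 (hC i)).2)
  have hlow : -C ≤ liminf u l :=
    le_liminf_of_le (isCoboundedUnder_ge_of_le l fun i => (abs_le.1 (hC i)).2)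
      (Eventually.of_forall fun i => (abs_le.1 (hC i)).1)
  linarith

/-- On this sign pattern the `ℓ¹`-norm `∑ |α n|` is the linear functional `∑ (-1) ^ n * α n`,
which makes the set convex. -/
def alternatingTail (m : ℕ) : Set (ℕ →₀ ℝ) :=
  {α | (∀ n < m, α n = 0) ∧ (∀ n, 0 ≤ (-1) ^ n * α n) ∧
    Finsupp.linearCombination ℝ (fun n => (-1 : ℝ) ^ n) α = 1}

theorem convex_alternatingTail (m : ℕ) : Convex ℝ (alternatingTail m) := by
  rintro α ⟨hα0, hαsign, hα1⟩ β ⟨hβ0, hβsign, hβ1⟩ a b ha hb hab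
  refine ⟨fun n hn => by simp [hα0 n hn, hβ0 n hn], fun n => ?_, ?_⟩
  · have := hαsign n
    have := hβsign n
    simp only [Finsupp.add_apply, Finsupp.smul_apply, smul_eq_mul]
    nlinarith
  · simp [hα1, hβ1, hab]

theorem sum_abs_eq_one_of_mem_alternatingTail {m : ℕ} {α : ℕ →₀ ℝ}
    (hα : α ∈ alternatingTail m) : ∑ n ∈ α.support, |α n| = 1 := by
  obtain ⟨-, hsign, hsum⟩ := hα
  have habs : ∀ n, |α n| = (-1) ^ n * α n := fun n => by
    rw [← abs_of_nonneg (hsign n), abs_mul, abs_pow, abs_neg, abs_one, one_pow, one_mul]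
  rw [Finsupp.linearCombination_apply, Finsupp.sum] at hsum
  simpa [habs, mul_comm] using hsum

theorem single_sub_single_mem_alternatingTail {m p q : ℕ} (hp : Even p) (hq : Odd q)
    (hmp : m ≤ p) (hmq : m ≤ q) :
    Finsupp.single p (2⁻¹ : ℝ) - Finsupp.single q 2⁻¹ ∈ alternatingTail m := by
  have hpq : p ≠ q := by rintro rfl; exact (Nat.not_even_iff_odd.2 hq) hp
  refine ⟨fun n hn => ?_, fun n => ?_, ?_⟩
  · simp [show p ≠ n by omega, show q ≠ n by omega]
  · rcases eq_or_ne p n with rfl | hpn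
    · simp [hpq, hp.neg_one_pow]
    rcases eq_or_ne q n with rfl | hqn
    · simp [hpn, hq.neg_one_pow]
    · simp [hpn, hqn]
  · simp [hp.neg_one_pow, hq.neg_one_pow]
    norm_num

noncomputable def jamesTailInf (x : ℕ → X) (m : ℕ) : ℝ :=
  sInf {r : ℝ | ∃ α : ℕ →₀ ℝ, (∀ n < m, α n = 0) ∧
    (∑ n ∈ α.support, |α n|) = 1 ∧ r = ‖∑ n ∈ α.support, α n • x n‖}

theorem jamesTailInf_le_norm (x : ℕ → X) {m : ℕ} {α : ℕ →₀ ℝ} (h0 : ∀ n < m, α n = 0)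
    (h1 : ∑ n ∈ α.support, |α n| = 1) :
    jamesTailInf x m ≤ ‖∑ n ∈ α.support, α n • x n‖ :=
  csInf_le ⟨0, by rintro r ⟨β, -, -, rfl⟩; exact norm_nonneg _⟩ ⟨α, h0, h1, rfl⟩

theorem BoundedSeq.exists_abs_apply_le {x : ℕ → X} (hx : BoundedSeq x) :
    ∃ C, ∀ f : X →L[ℝ] ℝ, ‖f‖ ≤ 1 → ∀ n, |f (x n)| ≤ C := by
  obtain ⟨C, hC⟩ := hx
  refine ⟨C, fun f hf n => ?_⟩
  calc |f (x n)| = ‖f (x n)‖ := (Real.norm_eq_abs _).symm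
    _ ≤ 1 * ‖x n‖ := f.le_of_opNorm_le hf (x n)
    _ ≤ C := by rw [one_mul]; exact hC n

theorem BoundedSeq.limsup_sub_liminf_le_delta {x : ℕ → X} (hx : BoundedSeq x)
    {f : X →L[ℝ] ℝ} (hf : ‖f‖ ≤ 1) :
    limsup (fun n => f (x n)) atTop - liminf (fun n => f (x n)) atTop ≤ delta x := by
  obtain ⟨C, hC⟩ := hx.exists_abs_apply_le
  refine le_csSup ⟨2 * C, ?_⟩ ⟨f, hf, rfl⟩
  rintro _ ⟨g, hg, rfl⟩
  exact limsup_sub_liminf_le_of_abs_le (hC g hg)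

theorem two_mul_jamesTailInf_le_delta {x : ℕ → X} (hx : BoundedSeq x) (m : ℕ) :
    2 * jamesTailInf x m ≤ delta x := by
  have hK := (convex_alternatingTail m).linear_image (Finsupp.linearCombination ℝ x)
  obtain ⟨g, hg1, hgd⟩ := hK.exists_norm_le_one_and_le_apply (d := jamesTailInf x m) <| by
    rintro _ ⟨α, hα, rfl⟩
    rw [Finsupp.linearCombination_apply, Finsupp.sum]
    exact jamesTailInf_le_norm x hα.1 (sum_abs_eq_one_of_mem_alternatingTail hα)
  have hgap : ∀ p ∈ {p | m ≤ p ∧ Even p}, ∀ q ∈ {q | m ≤ q ∧ Odd q},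
      g (x q) + 2 * jamesTailInf x m ≤ g (x p) := by
    rintro p ⟨hmp, hp⟩ q ⟨hmq, hq⟩
    have := hgd _ ⟨_, single_sub_single_mem_alternatingTail hp hq hmp hmq, rfl⟩
    simp only [map_sub, Finsupp.linearCombination_single, map_smul, smul_eq_mul] at this
    linarith
  obtain ⟨C, hC⟩ := hx.exists_abs_apply_le
  refine (le_limsup_sub_liminf_of_frequently ?_ ?_ hgap ?_ ?_).trans
    (hx.limsup_sub_liminf_le_delta hg1)
  · exact frequently_atTop.2 fun N => ⟨2 * (N + m), by omega, by omega, even_two_mul _⟩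
  · exact frequently_atTop.2 fun N => ⟨2 * (N + m) + 1, by omega, by omega, odd_two_mul_add_one _⟩
  · exact isBoundedUnder_of ⟨C, fun n => (abs_le.1 (hC g hg1 n)).2⟩
  · exact isBoundedUnder_of ⟨-C, fun n => (abs_le.1 (hC g hg1 n)).1⟩

theorem stmt1_general (x : ℕ → X) (hx : BoundedSeq x) :
    2 * epsJ x ≤ delta x := by
  have hle : ⨆ m, jamesTailInf x m ≤ delta x / 2 :=
    ciSup_le fun m => by linarith [two_mul_jamesTailInf_le_delta hx m]
  change 2 * ⨆ m, jamesTailInf x m ≤ delta x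
  linarith

theorem stmt1 [CompleteSpace X] (x : ℕ → X) (hx : BoundedSeq x) :
    2 * epsJ x ≤ delta x :=
  stmt1_general x hx
end

section
/- For every bounded sequence (x_n) in a real Banach space X, δ_HJ(x_n) ≥ ε_J(x_n), where δ_HJ(x_n) = sup_{x* in the closed unit ball of X*} limsup_n x*(x_n). -/
/-!
Fix `m` and let `c` be the infimum of `‖∑ αₙ xₙ‖` over `ℓ¹`-normalized coefficients supported
on `[m, ∞)`. By homogeneity `c ‖α‖₁ ≤ ‖∑ αₙ xₙ‖` for all such `α`, so for `c > 0` the map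
`∑ αₙ xₙ ↦ c ∑ αₙ` is a well-defined functional of norm at most `1` on the span of the tail.
Its Hahn–Banach extension `F` satisfies `F xₙ = c` for `n ≥ m`, hence `limsup F xₙ = c ≤ δ_HJ`.
-/

open Filter Topology

variable {X : Type*} [NormedAddCommGroup X] [NormedSpace ℝ X]

theorem LinearMap.exists_strongDual_comp_eq_of_norm_le {𝕜 M E : Type*} [RCLike 𝕜]
    [AddCommGroup M] [Module 𝕜 M] [SeminormedAddCommGroup E] [NormedSpace 𝕜 E]
    (T : M →ₗ[𝕜] E) (s : M →ₗ[𝕜] 𝕜) (h : ∀ p, ‖s p‖ ≤ ‖T p‖) :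
    ∃ F : StrongDual 𝕜 E, ‖F‖ ≤ 1 ∧ ∀ p, F (T p) = s p := by
  have hker : LinearMap.ker T ≤ LinearMap.ker s := fun p hp => by
    simpa [LinearMap.mem_ker.1 hp] using h p
  let g : LinearMap.range T →ₗ[𝕜] 𝕜 :=
    (LinearMap.ker T).liftQ s hker ∘ₗ T.quotKerEquivRange.symm.toLinearMap
  have hg : ∀ p, g ⟨T p, LinearMap.mem_range_self T p⟩ = s p := fun p => by
    simp [g]
  let g₁ : StrongDual 𝕜 (LinearMap.range T) := g.mkContinuous 1 <| by
    rintro ⟨_, p, rfl⟩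
    rw [one_mul, hg]
    exact h p
  obtain ⟨F, hFg, hFn⟩ := exists_extension_norm_eq _ g₁
  refine ⟨F, hFn ▸ LinearMap.mkContinuous_norm_le _ zero_le_one _, fun p => ?_⟩
  rw [← hg, hFg ⟨T p, LinearMap.mem_range_self T p⟩]
  rfl

noncomputable def jamesInf (x : ℕ → X) (m : ℕ) : ℝ :=
  sInf {r : ℝ | ∃ α : ℕ →₀ ℝ, (∀ n < m, α n = 0) ∧
    (∑ n ∈ α.support, |α n|) = 1 ∧ r = ‖∑ n ∈ α.support, α n • x n‖}

theorem epsJ_eq_iSup_jamesInf (x : ℕ → X) : epsJ x = ⨆ m, jamesInf x m := rfl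

theorem jamesInf_le (x : ℕ → X) {m : ℕ} {α : ℕ →₀ ℝ} (hα : ∀ n < m, α n = 0)
    (h1 : ∑ n ∈ α.support, |α n| = 1) : jamesInf x m ≤ ‖∑ n ∈ α.support, α n • x n‖ :=
  csInf_le ⟨0, by rintro r ⟨β, -, -, rfl⟩; exact norm_nonneg _⟩ ⟨α, hα, h1, rfl⟩

theorem jamesInf_mul_sum_abs_le (x : ℕ → X) {m : ℕ} {α : ℕ →₀ ℝ} (hα : ∀ n < m, α n = 0) :
    jamesInf x m * ∑ n ∈ α.support, |α n| ≤ ‖∑ n ∈ α.support, α n • x n‖ := by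
  rcases eq_or_ne α 0 with rfl | hα0
  · simp
  set s := ∑ n ∈ α.support, |α n|
  have hs : 0 < s := Finset.sum_pos (fun n hn => abs_pos.2 (Finsupp.mem_support_iff.1 hn))
    (Finsupp.support_nonempty_iff.2 hα0)
  have hsupp : (s⁻¹ • α).support = α.support := Finsupp.support_smul_eq (inv_ne_zero hs.ne')
  have hnormalized := jamesInf_le x (m := m) (α := s⁻¹ • α) (fun n hn => by simp [hα n hn]) <| by
    simp only [hsupp, Finsupp.smul_apply, smul_eq_mul, abs_mul, abs_inv, abs_of_pos hs,
      ← Finset.mul_sum, inv_mul_cancel₀ hs.ne', s]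
  simp only [hsupp, Finsupp.smul_apply, smul_assoc, ← Finset.smul_sum, norm_smul,
    Real.norm_eq_abs, abs_inv, abs_of_pos hs] at hnormalized
  rwa [← div_eq_inv_mul, le_div_iff₀ hs] at hnormalized

theorem exists_strongDual_apply_eq_of_tail {x : ℕ → X} {m : ℕ} {c : ℝ} (hc : 0 ≤ c)
    (h : ∀ α : ℕ →₀ ℝ, (∀ n < m, α n = 0) →
      c * ∑ n ∈ α.support, |α n| ≤ ‖∑ n ∈ α.support, α n • x n‖) :
    ∃ F : X →L[ℝ] ℝ, ‖F‖ ≤ 1 ∧ ∀ n, m ≤ n → F (x n) = c := by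
  let P := Finsupp.supported ℝ ℝ (Set.Ici m)
  let T := Finsupp.linearCombination ℝ x ∘ₗ P.subtype
  let s := Finsupp.linearCombination ℝ (fun _ => c) ∘ₗ P.subtype
  have hsT : ∀ p, ‖s p‖ ≤ ‖T p‖ := by
    rintro ⟨α, hα⟩
    have hα' : ∀ n < m, α n = 0 := fun n hn =>
      (Finsupp.mem_supported' _ _).1 hα n (Set.notMem_Ici.2 hn)
    simp only [s, T, LinearMap.comp_apply, Submodule.subtype_apply,
      Finsupp.linearCombination_apply, Finsupp.sum, smul_eq_mul, Real.norm_eq_abs,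
      ← Finset.sum_mul]
    calc |(∑ n ∈ α.support, α n) * c| ≤ c * ∑ n ∈ α.support, |α n| := by
          rw [abs_mul, abs_of_nonneg hc, mul_comm]
          exact mul_le_mul_of_nonneg_left (Finset.abs_sum_le_sum_abs _ _) hc
      _ ≤ _ := h α hα'
  obtain ⟨F, hF, hFx⟩ := LinearMap.exists_strongDual_comp_eq_of_norm_le (M := P) T s hsT
  refine ⟨F, hF, fun n hn => ?_⟩
  simpa [T, s] using hFx ⟨Finsupp.single n 1, Finsupp.single_mem_supported ℝ 1 hn⟩

theorem bddAbove_limsup_of_boundedSeq {x : ℕ → X} (hx : BoundedSeq x) :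
    BddAbove {r : ℝ | ∃ f : X →L[ℝ] ℝ, ‖f‖ ≤ 1 ∧
      r = Filter.limsup (fun n => f (x n)) Filter.atTop} := by
  obtain ⟨C, hC⟩ := hx
  refine ⟨C, ?_⟩
  rintro r ⟨f, hf, rfl⟩
  have hfx : ∀ n, |f (x n)| ≤ C := fun n =>
    (f.le_opNorm (x n)).trans (by nlinarith [hC n, norm_nonneg f, norm_nonneg (x n)])
  exact limsup_le_of_le (isCoboundedUnder_le_of_le atTop fun n => (abs_le.1 (hfx n)).1)
    (Eventually.of_forall fun n => (abs_le.1 (hfx n)).2)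

theorem limsup_le_deltaHJ {x : ℕ → X} (hx : BoundedSeq x) {f : X →L[ℝ] ℝ} (hf : ‖f‖ ≤ 1) :
    limsup (fun n => f (x n)) atTop ≤ deltaHJ x :=
  le_csSup (bddAbove_limsup_of_boundedSeq hx) ⟨f, hf, rfl⟩

theorem stmt2_general (x : ℕ → X) (hx : BoundedSeq x) :
    epsJ x ≤ deltaHJ x := by
  rw [epsJ_eq_iSup_jamesInf]
  refine ciSup_le fun m => ?_
  rcases le_or_gt (jamesInf x m) 0 with hc | hc
  · exact hc.trans (by simpa using limsup_le_deltaHJ hx (f := 0) (by simp))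
  obtain ⟨F, hF, hFx⟩ :=
    exists_strongDual_apply_eq_of_tail hc.le fun _ hα => jamesInf_mul_sum_abs_le x hα
  calc jamesInf x m = limsup (fun n => F (x n)) atTop := by
        rw [limsup_congr (eventually_atTop.2 ⟨m, hFx⟩), limsup_const]
    _ ≤ deltaHJ x := limsup_le_deltaHJ hx hF

theorem stmt2 [CompleteSpace X] (x : ℕ → X) (hx : BoundedSeq x) :
    epsJ x ≤ deltaHJ x :=
  stmt2_general x hx
end

section
/- Every bounded sequence (x_n) in a real Banach space contains an ε_J-stable subsequence, i.e. a subsequence (y_n) such that every further subsequence (z_n) of (y_n) satisfies ε_J(z_n) ≤ ε_J(y_n) (equivalently, sup over subsequences of ε_J equals ε_J(y_n)). -/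
/-!
`ε_J` can only grow when passing to a sequence that is eventually a subsequence of the given one.
Choose nested subsequences `Θ 0 ⊇ Θ 1 ⊇ ⋯`, where `ε_J` along `Θ (m+1)` is within `2⁻ᵐ` of the
supremum of `ε_J` over all subsequences of `Θ m`. The diagonal sequence is eventually a
subsequence of every `Θ m`, so each of its subsequences has `ε_J` at most that supremum, while
its own `ε_J` is at least that along `Θ (m+1)`; letting `m → ∞` gives stability.
-/

open Filter Topology

variable {X : Type*} [NormedAddCommGroup X] [NormedSpace ℝ X]

open Set

section Diagonal

def IsNestedSubseq (Θ : ℕ → ℕ → ℕ) : Prop :=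
  StrictMono (Θ 0) ∧ ∀ m, ∃ ψ, StrictMono ψ ∧ Θ (m + 1) = Θ m ∘ ψ

lemma StrictMono.exists_strictMono_comp_eq_of_range_subset {φ z : ℕ → ℕ} (hφ : StrictMono φ)
    (hz : StrictMono z) (h : range z ⊆ range φ) : ∃ g, StrictMono g ∧ z = φ ∘ g := by
  choose g hg using fun n => h (mem_range_self n)
  refine ⟨g, fun a b hab => hφ.lt_iff_lt.1 ?_, funext fun n => (hg n).symm⟩
  simpa only [hg] using hz hab

namespace IsNestedSubseq

variable {Θ : ℕ → ℕ → ℕ}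

lemma strictMono (hΘ : IsNestedSubseq Θ) (m : ℕ) : StrictMono (Θ m) := by
  induction m with
  | zero => exact hΘ.1
  | succ m ih =>
    obtain ⟨ψ, hψ, h⟩ := hΘ.2 m
    exact h ▸ ih.comp hψ

lemma le (hΘ : IsNestedSubseq Θ) {k k' : ℕ} (hk : k ≤ k') (n : ℕ) : Θ k n ≤ Θ k' n := by
  refine monotone_nat_of_le_succ (f := fun k => Θ k n) (fun k => ?_) hk
  obtain ⟨ψ, hψ, h⟩ := hΘ.2 k
  rw [h]
  exact (hΘ.strictMono k).monotone (hψ.id_le n)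

lemma lt (hΘ : IsNestedSubseq Θ) {k k' n n' : ℕ} (hk : k ≤ k') (hn : n < n') :
    Θ k n < Θ k' n' :=
  (hΘ.strictMono k hn).trans_le (hΘ.le hk n')

lemma range_subset (hΘ : IsNestedSubseq Θ) {k k' : ℕ} (hk : k ≤ k') :
    range (Θ k') ⊆ range (Θ k) := by
  refine antitone_nat_of_succ_le (f := fun k => range (Θ k)) (fun k => ?_) hk
  obtain ⟨ψ, -, h⟩ := hΘ.2 k
  simpa only [h] using range_comp_subset_range ψ (Θ k)

lemma strictMono_diag (hΘ : IsNestedSubseq Θ) : StrictMono fun n => Θ n n :=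
  fun _ _ h => hΘ.lt h.le h

lemma exists_eventuallyEq_comp_diag (hΘ : IsNestedSubseq Θ) (m : ℕ) :
    ∃ g, StrictMono g ∧ (fun n => Θ n n) =ᶠ[atTop] Θ m ∘ g := by
  -- `n ↦ Θ (max m n) n` agrees with the diagonal from `m` on and lies entirely inside `Θ m`.
  have hz : StrictMono fun n => Θ (max m n) n :=
    fun _ _ h => hΘ.lt (max_le_max_left m h.le) h
  have hrange : range (fun n => Θ (max m n) n) ⊆ range (Θ m) := by
    rintro _ ⟨n, rfl⟩
    exact hΘ.range_subset (le_max_left m n) (mem_range_self n)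
  obtain ⟨g, hg, hzg⟩ := (hΘ.strictMono m).exists_strictMono_comp_eq_of_range_subset hz hrange
  refine ⟨g, hg, ?_⟩
  filter_upwards [eventually_ge_atTop m] with n hn
  simp only [← hzg, max_eq_right hn]

end IsNestedSubseq

end Diagonal

section Stabilization

variable (F : (ℕ → ℕ) → ℝ)

noncomputable def subseqSup (φ : ℕ → ℕ) : ℝ :=
  ⨆ ψ : {ψ : ℕ → ℕ // StrictMono ψ}, F (φ ∘ ψ)

variable {F}

lemma le_subseqSup (hbdd : BddAbove (range F)) (φ : ℕ → ℕ) {ψ : ℕ → ℕ} (hψ : StrictMono ψ) :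
    F (φ ∘ ψ) ≤ subseqSup F φ :=
  le_ciSup (f := fun ψ : {ψ : ℕ → ℕ // StrictMono ψ} => F (φ ∘ ψ))
    (hbdd.mono (range_subset_iff.2 fun _ => mem_range_self _)) ⟨ψ, hψ⟩

lemma exists_strictMono_lt_of_lt_subseqSup {φ : ℕ → ℕ} {a : ℝ} (h : a < subseqSup F φ) :
    ∃ ψ, StrictMono ψ ∧ a < F (φ ∘ ψ) := by
  have : Nonempty {ψ : ℕ → ℕ // StrictMono ψ} := ⟨⟨id, strictMono_id⟩⟩
  obtain ⟨ψ, hψ⟩ := exists_lt_of_lt_ciSup h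
  exact ⟨ψ.1, ψ.2, hψ⟩

theorem exists_strictMono_forall_comp_le (hbdd : BddAbove (range F))
    (hF : ∀ φ φ' g, StrictMono g → φ' =ᶠ[atTop] φ ∘ g → F φ ≤ F φ') :
    ∃ φ, StrictMono φ ∧ ∀ ψ, StrictMono ψ → F (φ ∘ ψ) ≤ F φ := by
  choose Ψ hΨ hΨlt using fun (m : ℕ) (φ : ℕ → ℕ) =>
    exists_strictMono_lt_of_lt_subseqSup (F := F) (φ := φ)
      (sub_lt_self (subseqSup F φ) (pow_pos (by norm_num : (0 : ℝ) < 1 / 2) m))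
  let Θ : ℕ → ℕ → ℕ := fun m => Nat.rec id (fun m θ => θ ∘ Ψ m θ) m
  have hΘ : IsNestedSubseq Θ := ⟨strictMono_id, fun m => ⟨_, hΨ m (Θ m), rfl⟩⟩
  refine ⟨fun n => Θ n n, hΘ.strictMono_diag, fun ψ hψ => ?_⟩
  have key : ∀ m : ℕ, F ((fun n => Θ n n) ∘ ψ) ≤ F (fun n => Θ n n) + (1 / 2) ^ m := by
    intro m
    obtain ⟨g, hg, hdiag⟩ := hΘ.exists_eventuallyEq_comp_diag m
    obtain ⟨g', hg', hdiag'⟩ := hΘ.exists_eventuallyEq_comp_diag (m + 1)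
    calc F ((fun n => Θ n n) ∘ ψ)
        ≤ F (Θ m ∘ (g ∘ ψ)) := hF _ _ id strictMono_id (hdiag.comp_tendsto hψ.tendsto_atTop).symm
      _ ≤ subseqSup F (Θ m) := le_subseqSup hbdd _ (hg.comp hψ)
      _ ≤ F (Θ (m + 1)) + (1 / 2) ^ m := by linarith [hΨlt m (Θ m)]
      _ ≤ F (fun n => Θ n n) + (1 / 2) ^ m := by gcongr; exact hF _ _ g' hg' hdiag'
  have hlim : Tendsto (fun m : ℕ => F (fun n => Θ n n) + (1 / 2 : ℝ) ^ m) atTop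
      (𝓝 (F fun n => Θ n n)) := by
    simpa using tendsto_const_nhds.add (tendsto_pow_atTop_nhds_zero_of_lt_one
      (by norm_num : (0 : ℝ) ≤ 1 / 2) (by norm_num))
  exact ge_of_tendsto' hlim key

end Stabilization

section JamesConstant

noncomputable def epsJSet (x : ℕ → X) (m : ℕ) : Set ℝ :=
  {r : ℝ | ∃ α : ℕ →₀ ℝ, (∀ n < m, α n = 0) ∧
    (∑ n ∈ α.support, |α n|) = 1 ∧ r = ‖∑ n ∈ α.support, α n • x n‖}

lemma norm_mem_epsJSet (x : ℕ → X) (m : ℕ) : ‖x m‖ ∈ epsJSet x m :=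
  ⟨Finsupp.single m 1, fun n hn => Finsupp.single_eq_of_ne hn.ne, by simp, by simp⟩

lemma epsJSet_bddBelow (x : ℕ → X) (m : ℕ) : BddBelow (epsJSet x m) :=
  ⟨0, by rintro _ ⟨α, -, -, rfl⟩; exact norm_nonneg _⟩

lemma le_of_mem_support_of_forall_lt {α : ℕ →₀ ℝ} {m n : ℕ} (hα : ∀ k < m, α k = 0)
    (hn : n ∈ α.support) : m ≤ n :=
  not_lt.1 fun hlt => Finsupp.mem_support_iff.1 hn (hα n hlt)

lemma epsJSet_antitone (x : ℕ → X) {m m' : ℕ} (h : m ≤ m') : epsJSet x m' ⊆ epsJSet x m := by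
  rintro r ⟨α, hα, h1, h2⟩
  exact ⟨α, fun n hn => hα n (hn.trans_le h), h1, h2⟩

lemma epsJSet_subset_of_eqOn {y z : ℕ → X} {m : ℕ} (h : EqOn y z (Ici m)) :
    epsJSet y m ⊆ epsJSet z m := by
  rintro r ⟨α, hα, h1, rfl⟩
  refine ⟨α, hα, h1, congrArg norm (Finset.sum_congr rfl fun n hn => ?_)⟩
  rw [h (le_of_mem_support_of_forall_lt hα hn)]

lemma epsJSet_comp_subset (y : ℕ → X) {g : ℕ → ℕ} (hg : StrictMono g) (m : ℕ) :
    epsJSet (y ∘ g) m ⊆ epsJSet y m := by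
  rintro r ⟨α, hα, h1, rfl⟩
  refine ⟨α.embDomain ⟨g, hg.injective⟩, fun k hk => ?_, ?_, ?_⟩
  · refine Finsupp.notMem_support_iff.1 fun hk' => ?_
    rw [Finsupp.support_embDomain, Finset.mem_map] at hk'
    obtain ⟨n, hn, rfl⟩ := hk'
    exact hk.not_ge ((le_of_mem_support_of_forall_lt hα hn).trans (hg.id_le n))
  all_goals
    rw [Finsupp.support_embDomain, Finset.sum_map]
    simp only [Finsupp.embDomain_apply_self]
  exacts [h1, rfl]

variable {C : ℝ}

lemma sInf_epsJSet_le {x : ℕ → X} (hC : ∀ n, ‖x n‖ ≤ C) (m : ℕ) : sInf (epsJSet x m) ≤ C :=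
  csInf_le_of_le (epsJSet_bddBelow x m) (norm_mem_epsJSet x m) (hC m)

lemma epsJ_le {x : ℕ → X} (hC : ∀ n, ‖x n‖ ≤ C) : epsJ x ≤ C :=
  ciSup_le (sInf_epsJSet_le hC)

lemma epsJ_le_of_eventuallyEq_comp {y z : ℕ → X} (hz : ∀ n, ‖z n‖ ≤ C) {g : ℕ → ℕ}
    (hg : StrictMono g) (h : z =ᶠ[atTop] y ∘ g) : epsJ y ≤ epsJ z := by
  obtain ⟨N, hN⟩ := eventually_atTop.1 h
  refine ciSup_le fun m => ?_
  have hsub : epsJSet z (max m N) ⊆ epsJSet y (max m N) :=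
    (epsJSet_subset_of_eqOn fun n hn => hN n (le_of_max_le_right hn)).trans
      (epsJSet_comp_subset y hg _)
  calc sInf (epsJSet y m) ≤ sInf (epsJSet y (max m N)) :=
        csInf_le_csInf (epsJSet_bddBelow y m) ⟨_, norm_mem_epsJSet y _⟩
          (epsJSet_antitone y (le_max_left m N))
    _ ≤ sInf (epsJSet z (max m N)) :=
        csInf_le_csInf (epsJSet_bddBelow y _) ⟨_, norm_mem_epsJSet z _⟩ hsub
    _ ≤ epsJ z := le_ciSup ⟨C, by rintro _ ⟨k, rfl⟩; exact sInf_epsJSet_le hz k⟩ _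

end JamesConstant

theorem stmt5_general (x : ℕ → X) (hx : BoundedSeq x) :
    ∃ φ : ℕ → ℕ, StrictMono φ ∧
      ∀ ψ : ℕ → ℕ, StrictMono ψ → epsJ ((x ∘ φ) ∘ ψ) ≤ epsJ (x ∘ φ) := by
  obtain ⟨C, hC⟩ := hx
  refine exists_strictMono_forall_comp_le (F := fun φ => epsJ (x ∘ φ)) ?_ ?_
  · exact ⟨C, by rintro _ ⟨φ, rfl⟩; exact epsJ_le fun n => hC (φ n)⟩
  · intro φ φ' g hg h
    exact epsJ_le_of_eventuallyEq_comp (fun n => hC (φ' n)) hg (h.fun_comp x)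

theorem stmt5 [CompleteSpace X] (x : ℕ → X) (hx : BoundedSeq x) :
    ∃ φ : ℕ → ℕ, StrictMono φ ∧
      ∀ ψ : ℕ → ℕ, StrictMono ψ → epsJ ((x ∘ φ) ∘ ψ) ≤ epsJ (x ∘ φ) :=
  stmt5_general x hx
end

section
/- Every bounded sequence (x_n) in a real Banach space contains a δ-stable subsequence, i.e. a subsequence (y_n) such that every further subsequence (z_n) satisfies δ(z_n) ≥ δ(y_n) (equivalently, inf over subsequences of δ equals δ(y_n)). -/
open Filter Topology

variable {X : Type*} [NormedAddCommGroup X] [NormedSpace ℝ X]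

/-!
`δ` can only decrease when passing to a subsequence and ignores finitely many terms. Choose
nested subsequences `x ∘ Φ k` such that `δ (x ∘ Φ (k + 1))` is within `1 / (k + 1)` of the infimum
of `δ` over subsequences of `x ∘ Φ k`. From its `k`-th term on, the diagonal sequence
`n ↦ x (Φ n n)`, and each of its subsequences, is a subsequence of `x ∘ Φ k`. Hence `δ` of the
diagonal exceeds that infimum by less than `1 / (k + 1)`, while `δ` of any of its subsequences
is at least that infimum.
-/

open Set

noncomputable def oscAtTop (u : ℕ → ℝ) : ℝ := limsup u atTop - liminf u atTop

lemma oscAtTop_le {u : ℕ → ℝ} {C : ℝ} (hu : ∀ n, |u n| ≤ C) : oscAtTop u ≤ 2 * C := by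
  have hlimsup : limsup u atTop ≤ C :=
    limsup_le_of_le (isCoboundedUnder_le_of_le atTop fun n => (abs_le.1 (hu n)).1)
      (Eventually.of_forall fun n => (abs_le.1 (hu n)).2)
  have hliminf : -C ≤ liminf u atTop :=
    le_liminf_of_le (isCoboundedUnder_ge_of_le atTop fun n => (abs_le.1 (hu n)).2)
      (Eventually.of_forall fun n => (abs_le.1 (hu n)).1)
  unfold oscAtTop
  linarith

lemma oscAtTop_comp_le {u : ℕ → ℝ} {C : ℝ} (hu : ∀ n, |u n| ≤ C) {φ : ℕ → ℕ}
    (hφ : Tendsto φ atTop atTop) : oscAtTop (u ∘ φ) ≤ oscAtTop u := by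
  have hlimsup : limsup (u ∘ φ) atTop ≤ limsup u atTop :=
    hφ.limsup_comp_le_limsup (isCoboundedUnder_le_of_le _ fun n => (abs_le.1 (hu n)).1)
      (isBoundedUnder_of ⟨C, fun n => (abs_le.1 (hu n)).2⟩)
  have hliminf : liminf u atTop ≤ liminf (u ∘ φ) atTop :=
    hφ.liminf_le_liminf_comp (isCoboundedUnder_ge_of_le _ fun n => (abs_le.1 (hu n)).2)
      (isBoundedUnder_of ⟨-C, fun n => (abs_le.1 (hu n)).1⟩)
  unfold oscAtTop
  linarith

lemma oscAtTop_nat_add (u : ℕ → ℝ) (k : ℕ) : oscAtTop (fun n => u (n + k)) = oscAtTop u := by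
  simp only [oscAtTop, limsup_nat_add, liminf_nat_add]

lemma delta_eq_sSup_oscAtTop (y : ℕ → X) :
    delta y = sSup {r | ∃ f : X →L[ℝ] ℝ, ‖f‖ ≤ 1 ∧ r = oscAtTop fun n => f (y n)} :=
  rfl

lemma BoundedSeq.comp {E : Type*} [NormedAddCommGroup E] {y : ℕ → E} (hy : BoundedSeq y)
    (φ : ℕ → ℕ) : BoundedSeq (y ∘ φ) :=
  let ⟨C, hC⟩ := hy
  ⟨C, fun n => hC (φ n)⟩

lemma abs_apply_le_of_norm_le_one {f : X →L[ℝ] ℝ} (hf : ‖f‖ ≤ 1) {v : X} {C : ℝ}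
    (hv : ‖v‖ ≤ C) : |f v| ≤ C :=
  calc |f v| ≤ ‖f‖ * ‖v‖ := f.le_opNorm v
    _ ≤ 1 * C := mul_le_mul hf hv (norm_nonneg _) zero_le_one
    _ = C := one_mul C

lemma BoundedSeq.bddAbove_oscAtTop {y : ℕ → X} (hy : BoundedSeq y) :
    BddAbove {r | ∃ f : X →L[ℝ] ℝ, ‖f‖ ≤ 1 ∧ r = oscAtTop fun n => f (y n)} := by
  obtain ⟨C, hC⟩ := hy
  refine ⟨2 * C, ?_⟩
  rintro r ⟨f, hf, rfl⟩
  exact oscAtTop_le fun n => abs_apply_le_of_norm_le_one hf (hC n)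

lemma delta_nonneg {y : ℕ → X} (hy : BoundedSeq y) : 0 ≤ delta y :=
  le_csSup hy.bddAbove_oscAtTop ⟨0, by simp⟩

lemma delta_comp_le {y : ℕ → X} (hy : BoundedSeq y) {φ : ℕ → ℕ} (hφ : Tendsto φ atTop atTop) :
    delta (y ∘ φ) ≤ delta y := by
  rw [delta_eq_sSup_oscAtTop]
  refine Real.sSup_le ?_ (delta_nonneg hy)
  rintro r ⟨f, hf, rfl⟩
  have ⟨C, hC⟩ := hy
  exact (oscAtTop_comp_le (fun n => abs_apply_le_of_norm_le_one hf (hC n)) hφ).trans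
    (le_csSup hy.bddAbove_oscAtTop ⟨f, hf, rfl⟩)

lemma delta_nat_add (y : ℕ → X) (k : ℕ) : delta (fun n => y (n + k)) = delta y := by
  have h (f : X →L[ℝ] ℝ) : (oscAtTop fun n => f (y (n + k))) = oscAtTop fun n => f (y n) :=
    oscAtTop_nat_add (fun n => f (y n)) k
  simp only [delta_eq_sSup_oscAtTop, h]

lemma StrictMono.exists_strictMono_eq_comp_of_range_subset {ι κ β : Type*} [LinearOrder ι]
    [Preorder κ] [Preorder β] {f : ι → β} {g : κ → β} (hf : StrictMono f) (hg : StrictMono g)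
    (h : range g ⊆ range f) : ∃ τ : κ → ι, StrictMono τ ∧ g = f ∘ τ := by
  choose τ hτ using fun n => h (mem_range_self n)
  refine ⟨τ, fun a b hab => ?_, funext fun n => (hτ n).symm⟩
  rw [← hf.lt_iff_lt, hτ, hτ]
  exact hg hab

lemma StrictMono.le_apply_of_range_subset {f g : ℕ → ℕ} (hf : StrictMono f) (hg : StrictMono g)
    (h : range g ⊆ range f) (n : ℕ) : f n ≤ g n := by
  obtain ⟨τ, hτ, rfl⟩ := hf.exists_strictMono_eq_comp_of_range_subset hg h
  exact hf.monotone hτ.le_apply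

lemma strictMono_diag {Φ : ℕ → ℕ → ℕ} (hΦ : ∀ k, StrictMono (Φ k))
    (hsub : ∀ k, range (Φ (k + 1)) ⊆ range (Φ k)) : StrictMono fun n => Φ n n :=
  strictMono_nat_of_lt_succ fun n =>
    (hΦ n n.lt_succ_self).trans_le ((hΦ n).le_apply_of_range_subset (hΦ (n + 1)) (hsub n) _)

lemma diag_mem_range {Φ : ℕ → ℕ → ℕ} (hsub : ∀ k, range (Φ (k + 1)) ⊆ range (Φ k)) {k m : ℕ}
    (hkm : k ≤ m) : Φ m m ∈ range (Φ k) :=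
  antitone_nat_of_succ_le (f := fun k => range (Φ k)) hsub hkm (mem_range_self m)

lemma exists_diag_comp_add_eq_comp {Φ : ℕ → ℕ → ℕ} (hΦ : ∀ k, StrictMono (Φ k))
    (hsub : ∀ k, range (Φ (k + 1)) ⊆ range (Φ k)) (k : ℕ) {ψ : ℕ → ℕ} (hψ : StrictMono ψ) :
    ∃ τ, StrictMono τ ∧ (fun n => Φ (ψ (n + k)) (ψ (n + k))) = Φ k ∘ τ := by
  refine (hΦ k).exists_strictMono_eq_comp_of_range_subset
    ((strictMono_diag hΦ hsub).comp (hψ.comp fun a b hab => Nat.add_lt_add_right hab k)) ?_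
  rintro _ ⟨n, rfl⟩
  exact diag_mem_range hsub ((Nat.le_add_left k n).trans hψ.le_apply)

/-- For `G g = delta (x ∘ g)` this is `tildeDelta (x ∘ g)`. -/
noncomputable def subseqInf (G : (ℕ → ℕ) → ℝ) (g : ℕ → ℕ) : ℝ :=
  ⨅ φ : {φ : ℕ → ℕ // StrictMono φ}, G (g ∘ φ)

lemma subseqInf_le {G : (ℕ → ℕ) → ℝ} (hbdd : BddBelow (range G)) (g : ℕ → ℕ) {φ : ℕ → ℕ}
    (hφ : StrictMono φ) : subseqInf G g ≤ G (g ∘ φ) :=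
  ciInf_le (f := fun φ : {φ : ℕ → ℕ // StrictMono φ} => G (g ∘ φ))
    (hbdd.mono (range_subset_iff.2 fun _ => mem_range_self _)) ⟨φ, hφ⟩

lemma exists_nested_subseqInf_lt (G : (ℕ → ℕ) → ℝ) {ε : ℕ → ℝ} (hε : ∀ k, 0 < ε k) :
    ∃ Φ : ℕ → ℕ → ℕ, (∀ k, StrictMono (Φ k)) ∧ (∀ k, range (Φ (k + 1)) ⊆ range (Φ k)) ∧
      ∀ k, G (Φ (k + 1)) < subseqInf G (Φ k) + ε k := by
  have : Nonempty {φ : ℕ → ℕ // StrictMono φ} := ⟨⟨id, strictMono_id⟩⟩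
  choose next hnext using fun (k : ℕ) (g : ℕ → ℕ) =>
    exists_lt_of_ciInf_lt (lt_add_of_pos_right (subseqInf G g) (hε k))
  let Φ : ℕ → ℕ → ℕ := fun k => Nat.rec id (fun j g => g ∘ next j g) k
  refine ⟨Φ, fun k => ?_, fun k => range_comp_subset_range _ _, fun k => hnext k (Φ k)⟩
  induction k with
  | zero => exact strictMono_id
  | succ k ih => exact ih.comp (next k (Φ k)).2

theorem exists_strictMono_forall_le_comp (G : (ℕ → ℕ) → ℝ) (hbdd : BddBelow (range G))
    (hcomp : ∀ g φ, StrictMono φ → G (g ∘ φ) ≤ G g)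
    (hshift : ∀ g k, G (fun n => g (n + k)) = G g) :
    ∃ d : ℕ → ℕ, StrictMono d ∧ ∀ ψ, StrictMono ψ → G d ≤ G (d ∘ ψ) := by
  obtain ⟨Φ, hΦ, hsub, hΦlt⟩ :=
    exists_nested_subseqInf_lt G fun k => Nat.one_div_pos_of_nat (α := ℝ) (n := k)
  refine ⟨fun n => Φ n n, strictMono_diag hΦ hsub, fun ψ hψ => ?_⟩
  have upper (k : ℕ) : G (fun n => Φ n n) < subseqInf G (Φ k) + 1 / (k + 1) := by
    obtain ⟨τ, hτ, hτeq⟩ := exists_diag_comp_add_eq_comp hΦ hsub (k + 1) strictMono_id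
    calc G (fun n => Φ n n) = G (Φ (k + 1) ∘ τ) := by rw [← hτeq]; exact (hshift _ (k + 1)).symm
      _ ≤ G (Φ (k + 1)) := hcomp _ _ hτ
      _ < subseqInf G (Φ k) + 1 / (k + 1) := hΦlt k
  have lower (k : ℕ) : subseqInf G (Φ k) ≤ G ((fun n => Φ n n) ∘ ψ) := by
    obtain ⟨τ, hτ, hτeq⟩ := exists_diag_comp_add_eq_comp hΦ hsub k hψ
    calc subseqInf G (Φ k) ≤ G (Φ k ∘ τ) := subseqInf_le hbdd _ hτ
      _ = G ((fun n => Φ n n) ∘ ψ) := by rw [← hτeq]; exact hshift ((fun n => Φ n n) ∘ ψ) k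
  have hlim : Tendsto (fun k : ℕ => G ((fun n => Φ n n) ∘ ψ) + 1 / ((k : ℝ) + 1)) atTop
      (𝓝 (G ((fun n => Φ n n) ∘ ψ))) := by
    simpa only [add_zero] using
      tendsto_const_nhds.add (tendsto_one_div_add_atTop_nhds_zero_nat (𝕜 := ℝ))
  exact ge_of_tendsto' hlim fun k => (upper k).le.trans (add_le_add_left (lower k) _)

theorem stmt6_general (x : ℕ → X) (hx : BoundedSeq x) :
    ∃ φ : ℕ → ℕ, StrictMono φ ∧
      ∀ ψ : ℕ → ℕ, StrictMono ψ → delta ((x ∘ φ) ∘ ψ) ≥ delta (x ∘ φ) :=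
  exists_strictMono_forall_le_comp (fun g => delta (x ∘ g))
    ⟨0, forall_mem_range.2 fun g => delta_nonneg (hx.comp g)⟩
    (fun g _ hφ => delta_comp_le (hx.comp g) hφ.tendsto_atTop)
    (fun g k => delta_nat_add (x ∘ g) k)

theorem stmt6 [CompleteSpace X] (x : ℕ → X) (hx : BoundedSeq x) :
    ∃ φ : ℕ → ℕ, StrictMono φ ∧
      ∀ ψ : ℕ → ℕ, StrictMono ψ → delta ((x ∘ φ) ∘ ψ) ≥ delta (x ∘ φ) :=
  stmt6_general x hx
end

section
/- Let B ⊆ S(X*) be a boundary for a real Banach space X (for each x ∈ X there is b ∈ B with b(x) = ‖x‖). Then for every bounded sequence (x_n): δ_B(x_n) = δ(x_n), where δ_D(x_n) = sup_{x*∈D}(limsup x*(x_n) − liminf x*(x_n)). -/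
open Filter Topology

variable {X : Type*} [NormedAddCommGroup X] [NormedSpace ℝ X]

/-!
`δ_B ≤ δ` since `B` lies in the dual ball. Conversely, fix `f` in the ball with
`limsup f(x_n) = L`, `liminf f(x_n) = l`, and pick indices `p_k, q_k ≥ k` with `f(x_{p_k}) ≈ L`
and `f(x_{q_k}) ≈ l`. Then `f ≥ L - l - ε` on the closed convex hull of
`y_k = x_{p_k} - x_{q_k}`, so every point of that hull has norm `≥ L - l - ε`, and Simons'
inequality yields `b ∈ B` with `limsup b(y_k) ≥ L - l - 2ε`; but
`limsup b(y_k) ≤ limsup b(x_n) - liminf b(x_n)`.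

Simons' inequality is proved by the geometric-series argument. Let `W_k` be the closed convex
hull of the `k`-th tail of `(y_j)`. Choose `w_k ∈ W_k` greedily, nearly minimising
`‖H_k + 2^{-k-1} w‖` over `w ∈ W_k`, where `H_k = ∑_{j<k} 2^{-j-1} w_j`, and put
`T = ∑_j 2^{-j-1} w_j = H_k + 2^{-k} u_k` with `u_k ∈ W_k`. Comparing the greedy choice with
the midpoint of `w_k` and `u_{k+1}` shows `‖H_{k+1}‖ ≤ (‖H_k‖ + ‖T‖)/2 + O(4^{-k})`, hence
`‖T‖ - ‖H_k‖ ≳ 2^{-k} a` where `a` bounds the norms on `W_0` from below. A functional `b ∈ B`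
norming `T` then satisfies `b(u_k) ≳ a` for all `k`, which forces `limsup b(y_j) ≳ a`.
-/

section ClosedConvexHull

variable {E : Type*} [AddCommGroup E] [Module ℝ E] [TopologicalSpace E]

theorem closedConvexHull_subset_setOf_le {s : Set E} (g : E →L[ℝ] ℝ) {c : ℝ}
    (h : ∀ z ∈ s, g z ≤ c) : closedConvexHull ℝ s ⊆ {v | g v ≤ c} :=
  closedConvexHull_min h (convex_halfSpace_le g.isLinear c)
    (isClosed_le g.continuous continuous_const)

theorem closedConvexHull_subset_setOf_ge {s : Set E} (g : E →L[ℝ] ℝ) {c : ℝ}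
    (h : ∀ z ∈ s, c ≤ g z) : closedConvexHull ℝ s ⊆ {v | c ≤ g v} :=
  closedConvexHull_min h (convex_halfSpace_ge g.isLinear c)
    (isClosed_le continuous_const g.continuous)

theorem Convex.tsum_smul_mem [ContinuousSMul ℝ E] {C : Set E} (hC : Convex ℝ C)
    (hCc : IsClosed C) {w : ℕ → ℝ} {v : ℕ → E} (hw₀ : ∀ j, 0 ≤ w j) (hw : HasSum w 1)
    (hwv : Summable fun j => w j • v j) (hv : ∀ j, v j ∈ C) : ∑' j, w j • v j ∈ C := by
  have hlim : Tendsto (fun m => (Finset.range m).centerMass w v) atTop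
      (𝓝 (∑' j, w j • v j)) := by
    simpa [Finset.centerMass] using
      (hw.tendsto_sum_nat.inv₀ one_ne_zero).smul hwv.hasSum.tendsto_sum_nat
  refine hCc.mem_of_tendsto hlim ?_
  filter_upwards [hw.tendsto_sum_nat.eventually (lt_mem_nhds one_pos)] with m hm
  exact hC.centerMass_mem (fun j _ => hw₀ j) hm (fun j _ => hv j)

theorem le_limsup_of_forall_exists_mem_closedConvexHull (g : E →L[ℝ] ℝ) {y : ℕ → E}
    (hg : IsBoundedUnder (· ≤ ·) atTop fun j => g (y j)) {c : ℝ}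
    (h : ∀ k, ∃ v ∈ closedConvexHull ℝ (y '' Set.Ici k), c ≤ g v) :
    c ≤ limsup (fun j => g (y j)) atTop := by
  by_contra! hlt
  obtain ⟨d, hLd, hdc⟩ := exists_between hlt
  obtain ⟨k, hk⟩ := eventually_atTop.1 (eventually_lt_of_limsup_lt hLd hg)
  obtain ⟨v, hv, hcv⟩ := h k
  have hvd : g v ≤ d :=
    closedConvexHull_subset_setOf_le g (by rintro _ ⟨j, hj, rfl⟩; exact (hk j hj).le) hv
  linarith

end ClosedConvexHull

theorem hasSum_inv_two_pow_succ : HasSum (fun j : ℕ => (2:ℝ)⁻¹ ^ (j + 1)) 1 := by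
  convert hasSum_geometric_two' 1 using 1
  funext j
  rw [pow_succ, inv_pow]
  ring

theorem summable_inv_two_pow_succ_smul [CompleteSpace X] {v : ℕ → X} {M : ℝ}
    (hv : ∀ j, ‖v j‖ ≤ M) : Summable fun j => (2:ℝ)⁻¹ ^ (j + 1) • v j :=
  Summable.of_norm_bounded (hasSum_inv_two_pow_succ.summable.mul_right M) fun j => by
    rw [norm_smul, Real.norm_of_nonneg (by positivity)]
    exact mul_le_mul_of_nonneg_left (hv j) (by positivity)

theorem Set.Nonempty.exists_le_add {α : Type*} {S : Set α} (hS : S.Nonempty) {g : α → ℝ}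
    (hg : BddBelow (g '' S)) {η : ℝ} (hη : 0 < η) : ∃ u ∈ S, ∀ v ∈ S, g u ≤ g v + η := by
  obtain ⟨_, ⟨u, hu, rfl⟩, hlt⟩ := Real.lt_sInf_add_pos (hS.image g) hη
  exact ⟨u, hu, fun v hv => hlt.le.trans (by gcongr; exact csInf_le hg ⟨v, hv, rfl⟩)⟩

theorem ContinuousLinearMap.abs_apply_le {f : X →L[ℝ] ℝ} (hf : ‖f‖ ≤ 1) {z : X} {C : ℝ}
    (hz : ‖z‖ ≤ C) : |f z| ≤ C := by
  rw [← Real.norm_eq_abs]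
  exact (f.le_of_opNorm_le hf z).trans (by rwa [one_mul])

namespace Simons

noncomputable def partialSum (w : ℕ → X) (k : ℕ) : X :=
  ∑ j ∈ Finset.range k, (2:ℝ)⁻¹ ^ (j + 1) • w j

noncomputable def tailSum (w : ℕ → X) (k : ℕ) : X := ∑' i, (2:ℝ)⁻¹ ^ (i + 1) • w (k + i)

theorem partialSum_succ (w : ℕ → X) (k : ℕ) :
    partialSum w (k + 1) = partialSum w k + (2:ℝ)⁻¹ ^ (k + 1) • w k :=
  Finset.sum_range_succ _ _

theorem exists_greedy (W : ℕ → Set X) (hW : ∀ k, (W k).Nonempty) {ε : ℝ} (hε : 0 < ε) :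
    ∃ w : ℕ → X, ∀ k, w k ∈ W k ∧ ∀ v ∈ W k, ‖partialSum w (k + 1)‖ ≤
      ‖partialSum w k + (2:ℝ)⁻¹ ^ (k + 1) • v‖ + ε * (4:ℝ)⁻¹ ^ (k + 1) := by
  have hpick (h : X) (k : ℕ) : ∃ u ∈ W k, ∀ v ∈ W k, ‖h + (2:ℝ)⁻¹ ^ (k + 1) • u‖ ≤
      ‖h + (2:ℝ)⁻¹ ^ (k + 1) • v‖ + ε * (4:ℝ)⁻¹ ^ (k + 1) :=
    (hW k).exists_le_add ⟨0, by rintro _ ⟨v, -, rfl⟩; exact norm_nonneg _⟩ (by positivity)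
  choose pick hpickW hpickMin using hpick
  let H : ℕ → X := fun k => Nat.rec 0 (fun k h => h + (2:ℝ)⁻¹ ^ (k + 1) • pick h k) k
  have hH : ∀ k, H k = partialSum (fun j => pick (H j) j) k := by
    intro k
    induction k with
    | zero => simp [H, partialSum]
    | succ k ih => rw [partialSum_succ, ← ih]
  refine ⟨fun j => pick (H j) j, fun k => ⟨hpickW _ k, fun v hv => ?_⟩⟩
  rw [partialSum_succ, ← hH]
  exact hpickMin _ k v hv

theorem le_sub_of_le_avg_add {h : ℕ → ℝ} {t a ε : ℝ} (h0 : h 0 = 0) (ha : a ≤ t)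
    (hrec : ∀ k, h (k + 1) ≤ (h k + t) / 2 + ε * (4:ℝ)⁻¹ ^ (k + 1)) (k : ℕ) :
    (2:ℝ)⁻¹ ^ k * a - ((2:ℝ)⁻¹ ^ k - (4:ℝ)⁻¹ ^ k) * ε ≤ t - h k := by
  induction k with
  | zero => simp [h0, ha]
  | succ k ih =>
    have := hrec k
    rw [pow_succ, pow_succ] at *
    linarith

variable [CompleteSpace X] {w : ℕ → X} {M : ℝ}

theorem tailSum_zero_eq (hw : ∀ j, ‖w j‖ ≤ M) (k : ℕ) :
    tailSum w 0 = partialSum w k + (2:ℝ)⁻¹ ^ k • tailSum w k := by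
  rw [tailSum, tailSum, partialSum,
    ← (summable_inv_two_pow_succ_smul fun i => hw (k + i)).tsum_const_smul]
  simp only [zero_add, smul_smul, ← pow_add]
  rw [← (summable_inv_two_pow_succ_smul hw).sum_add_tsum_nat_add k]
  congr 1
  exact tsum_congr fun i => by rw [add_comm i k, add_assoc]

theorem tailSum_mem {W : Set X} (hW : Convex ℝ W) (hWc : IsClosed W) (hw : ∀ j, ‖w j‖ ≤ M)
    {k : ℕ} (hwW : ∀ i, w (k + i) ∈ W) : tailSum w k ∈ W :=
  hW.tsum_smul_mem hWc (fun _ => by positivity) hasSum_inv_two_pow_succ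
    (summable_inv_two_pow_succ_smul fun i => hw (k + i)) hwW

theorem norm_partialSum_succ_le {W : Set X} (hW : Convex ℝ W) (hwM : ∀ j, ‖w j‖ ≤ M) {k : ℕ}
    {η : ℝ} (hmin : ∀ v ∈ W, ‖partialSum w (k + 1)‖ ≤ ‖partialSum w k + (2:ℝ)⁻¹ ^ (k + 1) • v‖ + η)
    (hwW : w k ∈ W) (htail : tailSum w (k + 1) ∈ W) :
    ‖partialSum w (k + 1)‖ ≤ (‖partialSum w k‖ + ‖tailSum w 0‖) / 2 + η := by
  -- the midpoint of `w k` and the next tail is the step that lands halfway to the full sum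
  have hmid : partialSum w k + (2:ℝ)⁻¹ ^ (k + 1) • ((2:ℝ)⁻¹ • w k + (2:ℝ)⁻¹ • tailSum w (k + 1))
      = (2:ℝ)⁻¹ • partialSum w k + (2:ℝ)⁻¹ • tailSum w 0 := by
    rw [tailSum_zero_eq hwM (k + 1), partialSum_succ, pow_succ]
    module
  calc ‖partialSum w (k + 1)‖
      ≤ ‖(2:ℝ)⁻¹ • partialSum w k + (2:ℝ)⁻¹ • tailSum w 0‖ + η :=
        hmid ▸ hmin _ (hW hwW htail (by norm_num) (by norm_num) (by norm_num))
    _ ≤ (‖partialSum w k‖ + ‖tailSum w 0‖) / 2 + η := by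
        grw [norm_add_le, norm_smul, norm_smul]
        norm_num
        linarith

end Simons

open Simons in
theorem IsBoundary.exists_forall_exists_mem_le_apply [CompleteSpace X] {B : Set (X →L[ℝ] ℝ)}
    (hB : IsBoundary B) {W : ℕ → Set X} (hanti : Antitone W) (hconv : ∀ k, Convex ℝ (W k))
    (hcl : ∀ k, IsClosed (W k)) (hne : ∀ k, (W k).Nonempty) {M : ℝ} (hM : ∀ v ∈ W 0, ‖v‖ ≤ M)
    {a : ℝ} (ha : ∀ v ∈ W 0, a ≤ ‖v‖) {ε : ℝ} (hε : 0 < ε) :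
    ∃ b ∈ B, ∀ k, ∃ v ∈ W k, a - ε ≤ b v := by
  obtain ⟨w, hw⟩ := exists_greedy W hne hε
  have hwM : ∀ j, ‖w j‖ ≤ M := fun j => hM _ (hanti (Nat.zero_le j) (hw j).1)
  have htail : ∀ k, tailSum w k ∈ W k := fun k =>
    tailSum_mem (hconv k) (hcl k) hwM fun i => hanti (Nat.le_add_right k i) (hw (k + i)).1
  have hlow := le_sub_of_le_avg_add (h := fun k => ‖partialSum w k‖) (by simp [partialSum])
    (ha _ (htail 0)) fun k =>
      norm_partialSum_succ_le (hconv k) hwM (hw k).2 (hw k).1 (hanti k.le_succ (htail (k + 1)))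
  obtain ⟨b, hbB, hbT⟩ := hB.2 (tailSum w 0)
  refine ⟨b, hbB, fun k => ⟨tailSum w k, htail k, ?_⟩⟩
  have hbH : b (partialSum w k) ≤ ‖partialSum w k‖ :=
    (le_abs_self _).trans (b.abs_apply_le (hB.1 b hbB).le le_rfl)
  have hsplit := congrArg b (tailSum_zero_eq hwM k)
  rw [map_add, map_smul, smul_eq_mul, hbT] at hsplit
  refine le_of_mul_le_mul_left ?_ (by positivity : (0:ℝ) < (2:ℝ)⁻¹ ^ k)
  linarith [hlow k, mul_nonneg (by positivity : (0:ℝ) ≤ (4:ℝ)⁻¹ ^ k) hε.le]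

/-- Simons' inequality. -/
theorem IsBoundary.exists_le_limsup [CompleteSpace X] {B : Set (X →L[ℝ] ℝ)} (hB : IsBoundary B)
    {y : ℕ → X} {M : ℝ} (hy : ∀ j, ‖y j‖ ≤ M) {a : ℝ}
    (ha : ∀ v ∈ closedConvexHull ℝ (Set.range y), a ≤ ‖v‖) {ε : ℝ} (hε : 0 < ε) :
    ∃ b ∈ B, a - ε ≤ limsup (fun j => b (y j)) atTop := by
  have hW0 : closedConvexHull ℝ (y '' Set.Ici 0) = closedConvexHull ℝ (Set.range y) := by
    rw [show Set.Ici 0 = Set.univ from Set.Ici_bot, Set.image_univ]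
  have hM : ∀ v ∈ closedConvexHull ℝ (y '' Set.Ici 0), ‖v‖ ≤ M := fun v hv =>
    mem_closedBall_zero_iff.1 <| closedConvexHull_min
      (by rintro _ ⟨j, -, rfl⟩; exact mem_closedBall_zero_iff.2 (hy j))
      (convex_closedBall 0 M) Metric.isClosed_closedBall hv
  obtain ⟨b, hb, hbW⟩ := hB.exists_forall_exists_mem_le_apply
    (W := fun k => closedConvexHull ℝ (y '' Set.Ici k))
    (fun k l hkl => (closedConvexHull ℝ).monotone (Set.image_mono (Set.Ici_subset_Ici.2 hkl)))
    (fun _ => convex_closedConvexHull) (fun _ => isClosed_closedConvexHull)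
    (fun k => ⟨y k, subset_closedConvexHull ⟨k, Set.self_mem_Ici, rfl⟩⟩) hM (hW0 ▸ ha) hε
  exact ⟨b, hb, le_limsup_of_forall_exists_mem_closedConvexHull b
    (isBoundedUnder_of ⟨M, fun j => (abs_le.1 (b.abs_apply_le (hB.1 b hb).le (hy j))).2⟩) hbW⟩

theorem limsup_comp_sub_comp_le {g : ℕ → ℝ} {K : ℝ} (hg : ∀ n, |g n| ≤ K) {p q : ℕ → ℕ}
    (hp : Tendsto p atTop atTop) (hq : Tendsto q atTop atTop) :
    limsup (fun k => g (p k) - g (q k)) atTop ≤ limsup g atTop - liminf g atTop := by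
  refine le_of_forall_pos_le_add fun ε hε => ?_
  have hup := hp.eventually <| eventually_lt_of_limsup_lt (lt_add_of_pos_right _ (half_pos hε))
    (isBoundedUnder_of ⟨K, fun n => (abs_le.1 (hg n)).2⟩)
  have hlow := hq.eventually <| eventually_lt_of_lt_liminf (sub_lt_self _ (half_pos hε))
    (isBoundedUnder_of ⟨-K, fun n => (abs_le.1 (hg n)).1⟩)
  have hcobdd : IsCoboundedUnder (· ≤ ·) atTop fun k => g (p k) - g (q k) :=
    (isBoundedUnder_of ⟨-(K + K), fun k => by
      linarith [(abs_le.1 (hg (p k))).1, (abs_le.1 (hg (q k))).2]⟩).isCoboundedUnder_le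
  exact limsup_le_of_le hcobdd ((hup.and hlow).mono fun k hk => by linarith [hk.1, hk.2])

noncomputable def seqOscillation (g : ℕ → ℝ) : ℝ := limsup g atTop - liminf g atTop

theorem seqOscillation_le {g : ℕ → ℝ} {K : ℝ} (hg : ∀ n, |g n| ≤ K) :
    seqOscillation g ≤ 2 * K := by
  have hsup : limsup g atTop ≤ K :=
    limsup_le_of_le (isBoundedUnder_of ⟨-K, fun n => (abs_le.1 (hg n)).1⟩).isCoboundedUnder_le
      (Eventually.of_forall fun n => (abs_le.1 (hg n)).2)
  have hinf : -K ≤ liminf g atTop :=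
    le_liminf_of_le (isBoundedUnder_of ⟨K, fun n => (abs_le.1 (hg n)).2⟩).isCoboundedUnder_ge
      (Eventually.of_forall fun n => (abs_le.1 (hg n)).1)
  rw [seqOscillation]
  linarith

theorem le_deltaD {D : Set (X →L[ℝ] ℝ)} (hD : ∀ f ∈ D, ‖f‖ ≤ 1) {x : ℕ → X} {C : ℝ}
    (hx : ∀ n, ‖x n‖ ≤ C) {f : X →L[ℝ] ℝ} (hf : f ∈ D) :
    seqOscillation (fun n => f (x n)) ≤ deltaD D x :=
  le_csSup ⟨2 * C, by
    rintro _ ⟨g, hg, rfl⟩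
    exact seqOscillation_le fun n => g.abs_apply_le (hD g hg) (hx n)⟩ ⟨f, hf, rfl⟩

theorem deltaD_le {D : Set (X →L[ℝ] ℝ)} (hD : D.Nonempty) {x : ℕ → X} {c : ℝ}
    (h : ∀ f ∈ D, seqOscillation (fun n => f (x n)) ≤ c) : deltaD D x ≤ c :=
  csSup_le (hD.elim fun f hf => ⟨_, f, hf, rfl⟩) (by rintro _ ⟨f, hf, rfl⟩; exact h f hf)

theorem IsBoundary.exists_seqOscillation_le_add [CompleteSpace X] {B : Set (X →L[ℝ] ℝ)}
    (hB : IsBoundary B) {x : ℕ → X} {C : ℝ} (hx : ∀ n, ‖x n‖ ≤ C) {f : X →L[ℝ] ℝ}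
    (hf : ‖f‖ ≤ 1) {ε : ℝ} (hε : 0 < ε) :
    ∃ b ∈ B, seqOscillation (fun n => f (x n)) ≤ seqOscillation (fun n => b (x n)) + ε := by
  have hfx : ∀ n, |f (x n)| ≤ C := fun n => f.abs_apply_le hf (hx n)
  set L := limsup (fun n => f (x n)) atTop
  set l := liminf (fun n => f (x n)) atTop
  have hup : ∃ᶠ n in atTop, L - ε / 4 < f (x n) :=
    frequently_lt_of_lt_limsup
      (isBoundedUnder_of ⟨-C, fun n => (abs_le.1 (hfx n)).1⟩).isCoboundedUnder_le (by linarith)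
  have hlow : ∃ᶠ n in atTop, f (x n) < l + ε / 4 :=
    frequently_lt_of_liminf_lt
      (isBoundedUnder_of ⟨C, fun n => (abs_le.1 (hfx n)).2⟩).isCoboundedUnder_ge (by linarith)
  choose p hp hpL using fun k => frequently_atTop.1 hup k
  choose q hq hql using fun k => frequently_atTop.1 hlow k
  have ha : ∀ v ∈ closedConvexHull ℝ (Set.range fun k => x (p k) - x (q k)),
      L - l - ε / 2 ≤ ‖v‖ := fun v hv =>
    (closedConvexHull_subset_setOf_ge f (by
      rintro _ ⟨k, rfl⟩
      simp only [map_sub]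
      linarith [hpL k, hql k]) hv).trans ((le_abs_self _).trans (f.abs_apply_le hf le_rfl))
  obtain ⟨b, hb, hby⟩ :=
    hB.exists_le_limsup (fun k => norm_sub_le_of_le (hx (p k)) (hx (q k))) ha (half_pos hε)
  refine ⟨b, hb, ?_⟩
  have hdiff := limsup_comp_sub_comp_le (fun n => b.abs_apply_le (hB.1 b hb).le (hx n))
    (tendsto_atTop_mono hp tendsto_id) (tendsto_atTop_mono hq tendsto_id)
  simp only [map_sub] at hby
  rw [seqOscillation, seqOscillation]
  linarith

theorem stmt10 [CompleteSpace X] (B : Set (X →L[ℝ] ℝ)) (hB : IsBoundary B)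
    (x : ℕ → X) (hx : BoundedSeq x) :
    deltaD B x = delta x := by
  obtain ⟨C, hC⟩ := hx
  have hB1 : ∀ b ∈ B, ‖b‖ ≤ 1 := fun b hb => (hB.1 b hb).le
  obtain ⟨b₀, hb₀, -⟩ := hB.2 0
  refine le_antisymm (deltaD_le ⟨b₀, hb₀⟩ fun b hb => le_deltaD (fun _ hf => hf) hC (hB1 b hb))
    (deltaD_le ⟨0, by simp⟩ fun f hf => le_of_forall_pos_le_add fun ε hε => ?_)
  obtain ⟨b, hb, hfb⟩ := hB.exists_seqOscillation_le_add hC hf hε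
  exact hfb.trans (by grw [le_deltaD hB1 hC hb])
end

section
/- Simons' equality: if B is a boundary for the real Banach space X, then for every bounded sequence (x_n) in X, sup_{b∈B} limsup_n b(x_n) = sup_{‖x*‖≤1} limsup_n x*(x_n). -/
/-!
`B` lies in the dual unit ball, so one inequality is immediate. For the other, fix `‖f‖ ≤ 1`
and `ε > 0` and pass to a subsequence `y` on which `f` stays above `limsup f (x n) - ε`; then
every infinite convex combination of the `y k` has norm at least that much.

Simons' argument: with `K n = tailHull y n`, greedily pick `v n ∈ K n` nearly minimising
`‖∑_{j<n} 2^{-j-1} v j + 2^{-n-1} v n‖` and put `z₀ = ∑_j 2^{-j-1} v j`, so that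
`z₀ = P n + 2^{-n} Q n` with `P n` the partial sums and `Q n ∈ K n` the rescaled tails.
Testing the choice of `v n` against the midpoint of `v n` and `Q (n+1)` gives
`‖P n‖ ≲ (1 - 2^{-n}) ‖z₀‖`, so any `b ∈ B` norming `z₀` satisfies `b (Q n) ≳ ‖z₀‖` for every
`n`, hence `b (y k) ≳ ‖z₀‖` for infinitely many `k`.
-/

open Filter Topology

variable {X : Type*} [NormedAddCommGroup X] [NormedSpace ℝ X]

lemma apply_le_norm_of_opNorm_le_one {f : X →L[ℝ] ℝ} (hf : ‖f‖ ≤ 1) (z : X) : f z ≤ ‖z‖ :=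
  (le_abs_self _).trans ((f.le_opNorm z).trans (mul_le_of_le_one_left (norm_nonneg z) hf))

lemma abs_apply_le_opNorm_mul (f : X →L[ℝ] ℝ) {y : ℕ → X} {M : ℝ} (hy : ∀ k, ‖y k‖ ≤ M)
    (k : ℕ) : |f (y k)| ≤ ‖f‖ * M :=
  (f.le_opNorm (y k)).trans (mul_le_mul_of_nonneg_left (hy k) (norm_nonneg f))

structure IsTailWeights (n : ℕ) (l : ℕ → ℝ) : Prop where
  nonneg : ∀ k, 0 ≤ l k
  summable : Summable l
  tsum_eq_one : ∑' k, l k = 1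
  eq_zero_of_lt : ∀ k < n, l k = 0

lemma summable_smul_of_nonneg_of_norm_le [CompleteSpace X] {ι : Type*} {g : ι → ℝ} {u : ι → X}
    {M : ℝ} (hg0 : ∀ i, 0 ≤ g i) (hg : Summable g) (hu : ∀ i, ‖u i‖ ≤ M) :
    Summable fun i => g i • u i :=
  (hg.mul_right M).of_norm_bounded fun i => by
    rw [norm_smul, Real.norm_of_nonneg (hg0 i)]
    exact mul_le_mul_of_nonneg_left (hu i) (hg0 i)

lemma isTailWeights_half_pow : IsTailWeights 0 fun j => (2⁻¹ : ℝ) ^ (j + 1) where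
  nonneg _ := by positivity
  summable := by simpa [pow_succ] using summable_geometric_two.mul_right (2⁻¹ : ℝ)
  tsum_eq_one := by
    simp_rw [pow_succ]
    rw [tsum_mul_right, tsum_geometric_inv_two]
    norm_num
  eq_zero_of_lt _ h := absurd h (Nat.not_lt_zero _)

namespace IsTailWeights

variable {n m : ℕ} {l l' : ℕ → ℝ}

lemma mono (h : m ≤ n) (hl : IsTailWeights n l) : IsTailWeights m l :=
  ⟨hl.nonneg, hl.summable, hl.tsum_eq_one, fun k hk => hl.eq_zero_of_lt k (hk.trans_le h)⟩

lemma single (n : ℕ) : IsTailWeights n (Pi.single n 1) where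
  nonneg k := by by_cases h : k = n <;> simp [h]
  summable := (hasSum_pi_single n 1).summable
  tsum_eq_one := (hasSum_pi_single n 1).tsum_eq
  eq_zero_of_lt k hk := Pi.single_eq_of_ne hk.ne 1

lemma convexComb (hl : IsTailWeights n l) (hl' : IsTailWeights n l') {a b : ℝ}
    (ha : 0 ≤ a) (hb : 0 ≤ b) (hab : a + b = 1) : IsTailWeights n (a • l + b • l') where
  nonneg k := add_nonneg (mul_nonneg ha (hl.nonneg k)) (mul_nonneg hb (hl'.nonneg k))
  summable := (hl.summable.const_smul a).add (hl'.summable.const_smul b)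
  tsum_eq_one := by
    simp only [Pi.add_apply, Pi.smul_apply, smul_eq_mul]
    rw [(hl.summable.mul_left a).tsum_add (hl'.summable.mul_left b), tsum_mul_left,
      tsum_mul_left, hl.tsum_eq_one, hl'.tsum_eq_one, mul_one, mul_one, hab]
  eq_zero_of_lt k hk := by simp [hl.eq_zero_of_lt k hk, hl'.eq_zero_of_lt k hk]

lemma summable_smul [CompleteSpace X] (hl : IsTailWeights n l) {y : ℕ → X} {M : ℝ}
    (hy : ∀ k, ‖y k‖ ≤ M) : Summable fun k => l k • y k :=
  summable_smul_of_nonneg_of_norm_le hl.nonneg hl.summable hy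

lemma tsum_mul_le (hl : IsTailWeights n l) {t : ℕ → ℝ} {M S : ℝ} (ht : ∀ k, |t k| ≤ M)
    (hS : ∀ k, n ≤ k → t k ≤ S) : ∑' k, l k * t k ≤ S := by
  have hlt : Summable fun k => l k * t k := hl.summable_smul ht
  calc ∑' k, l k * t k ≤ ∑' k, l k * S := by
        refine hlt.tsum_le_tsum (fun k => ?_) (hl.summable.mul_right S)
        rcases lt_or_ge k n with hk | hk
        · simp [hl.eq_zero_of_lt k hk]
        · exact mul_le_mul_of_nonneg_left (hS k hk) (hl.nonneg k)
    _ = S := by rw [tsum_mul_right, hl.tsum_eq_one, one_mul]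

variable {w : ℕ → ℝ} {c : ℕ → ℕ → ℝ}

lemma tsum_mul_eq_left (hc : ∀ j, IsTailWeights n (c j)) (j : ℕ) :
    ∑' k, w j * c j k = w j := by
  rw [tsum_mul_left, (hc j).tsum_eq_one, mul_one]

lemma summable_mul_prod (hw : IsTailWeights 0 w) (hc : ∀ j, IsTailWeights n (c j)) :
    Summable fun p : ℕ × ℕ => w p.1 * c p.1 p.2 :=
  (summable_prod_of_nonneg fun p => mul_nonneg (hw.nonneg _) ((hc _).nonneg _)).2
    ⟨fun j => (hc j).summable.mul_left (w j),
      by simpa only [tsum_mul_eq_left hc] using hw.summable⟩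

lemma tsum_mul (hw : IsTailWeights 0 w) (hc : ∀ j, IsTailWeights n (c j)) :
    IsTailWeights n fun k => ∑' j, w j * c j k := by
  have hg := summable_mul_prod hw hc
  refine ⟨fun k => tsum_nonneg fun j => mul_nonneg (hw.nonneg j) ((hc j).nonneg k),
    hg.prod_symm.prod, ?_, fun k hk => ?_⟩
  · rw [hg.tsum_comm, tsum_congr (tsum_mul_eq_left hc), hw.tsum_eq_one]
  · simp [(hc _).eq_zero_of_lt k hk]

end IsTailWeights

def tailHull (y : ℕ → X) (n : ℕ) : Set X :=
  {z | ∃ l, IsTailWeights n l ∧ ∑' k, l k • y k = z}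

section tailHull

variable {y : ℕ → X} {M : ℝ} {n : ℕ}

lemma tailHull_antitone (y : ℕ → X) : Antitone (tailHull y) :=
  fun _ _ h _ ⟨l, hl, hz⟩ => ⟨l, hl.mono h, hz⟩

lemma self_mem_tailHull (y : ℕ → X) (n : ℕ) : y n ∈ tailHull y n :=
  ⟨_, .single n, by rw [tsum_eq_single n fun k hk => by simp [hk]]; simp⟩

lemma convex_tailHull [CompleteSpace X] (hy : ∀ k, ‖y k‖ ≤ M) (n : ℕ) :
    Convex ℝ (tailHull y n) := by
  rintro _ ⟨l, hl, rfl⟩ _ ⟨l', hl', rfl⟩ a b ha hb hab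
  refine ⟨_, hl.convexComb hl' ha hb hab, ?_⟩
  simp only [Pi.add_apply, Pi.smul_apply, smul_eq_mul, add_smul, mul_smul]
  rw [((hl.summable_smul hy).const_smul a).tsum_add ((hl'.summable_smul hy).const_smul b),
    tsum_const_smul'', tsum_const_smul'']

lemma norm_le_of_mem_tailHull (hy : ∀ k, ‖y k‖ ≤ M) {z : X} (hz : z ∈ tailHull y n) :
    ‖z‖ ≤ M := by
  obtain ⟨l, hl, rfl⟩ := hz
  have hb : ∀ k, ‖l k • y k‖ ≤ l k * M := fun k => by
    rw [norm_smul, Real.norm_of_nonneg (hl.nonneg k)]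
    exact mul_le_mul_of_nonneg_left (hy k) (hl.nonneg k)
  have hsn : Summable fun k => ‖l k • y k‖ :=
    (hl.summable.mul_right M).of_nonneg_of_le (fun k => norm_nonneg _) hb
  calc ‖∑' k, l k • y k‖ ≤ ∑' k, ‖l k • y k‖ := norm_tsum_le_tsum_norm hsn
    _ ≤ ∑' k, l k * M := hsn.tsum_le_tsum hb (hl.summable.mul_right M)
    _ = M := by rw [tsum_mul_right, hl.tsum_eq_one, one_mul]

lemma apply_le_of_mem_tailHull [CompleteSpace X] (hy : ∀ k, ‖y k‖ ≤ M) (f : X →L[ℝ] ℝ)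
    {S : ℝ} (hS : ∀ k, n ≤ k → f (y k) ≤ S) {z : X} (hz : z ∈ tailHull y n) : f z ≤ S := by
  obtain ⟨l, hl, rfl⟩ := hz
  rw [f.map_tsum (hl.summable_smul hy)]
  simp only [map_smul, smul_eq_mul]
  exact hl.tsum_mul_le (abs_apply_le_opNorm_mul f hy) hS

lemma tsum_smul_mem_tailHull [CompleteSpace X] (hy : ∀ k, ‖y k‖ ≤ M) {w : ℕ → ℝ}
    (hw : IsTailWeights 0 w) {v : ℕ → X} (hv : ∀ j, v j ∈ tailHull y n) :
    ∑' j, w j • v j ∈ tailHull y n := by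
  choose c hc hcv using hv
  refine ⟨_, hw.tsum_mul hc, ?_⟩
  have hg := IsTailWeights.summable_mul_prod hw hc
  have hF : Summable (Function.uncurry fun j k => (w j * c j k) • y k) :=
    summable_smul_of_nonneg_of_norm_le (fun p => mul_nonneg (hw.nonneg _) ((hc _).nonneg _))
      hg (fun p => hy p.2)
  calc ∑' k, (∑' j, w j * c j k) • y k = ∑' k, ∑' j, (w j * c j k) • y k :=
        tsum_congr fun k => ((hg.prod_symm.prod_factor k).tsum_smul_const (y k)).symm
    _ = ∑' j, ∑' k, (w j * c j k) • y k := hF.tsum_comm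
    _ = ∑' j, w j • v j := by simp_rw [mul_smul, tsum_const_smul'', hcv]

end tailHull

lemma exists_mem_forall_le_add {α : Type*} {S : Set α} (hS : S.Nonempty) {g : α → ℝ}
    (hg : BddBelow (g '' S)) {η : ℝ} (hη : 0 < η) : ∃ a ∈ S, ∀ b ∈ S, g a ≤ g b + η := by
  obtain ⟨_, ⟨a, ha, rfl⟩, hlt⟩ :=
    exists_lt_of_csInf_lt (hS.image g) (lt_add_of_pos_right (sInf (g '' S)) hη)
  exact ⟨a, ha, fun b hb => hlt.le.trans (add_le_add_left (csInf_le hg ⟨b, hb, rfl⟩) η)⟩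

lemma exists_seq_forall_norm_add_smul_le {K : ℕ → Set X} (hK : ∀ n, (K n).Nonempty)
    (W : ℕ → ℝ) {η : ℕ → ℝ} (hη : ∀ n, 0 < η n) :
    ∃ v : ℕ → X, ∀ n, v n ∈ K n ∧ ∀ v' ∈ K n,
      ‖∑ j ∈ Finset.range n, W j • v j + W n • v n‖ ≤
        ‖∑ j ∈ Finset.range n, W j • v j + W n • v'‖ + η n := by
  have hmin : ∀ n (P : X), ∃ u ∈ K n, ∀ v' ∈ K n, ‖P + W n • u‖ ≤ ‖P + W n • v'‖ + η n :=
    fun n P => exists_mem_forall_le_add (hK n) ⟨0, by rintro _ ⟨_, _, rfl⟩; positivity⟩ (hη n)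
  choose u huK hu using hmin
  let P : ℕ → X := fun n => Nat.rec 0 (fun m Pm => Pm + W m • u m Pm) n
  have hP : ∀ n, P n = ∑ j ∈ Finset.range n, W j • u j (P j) := by
    intro n
    induction n with
    | zero => rfl
    | succ n ih => rw [Finset.sum_range_succ, ← ih]
  exact ⟨fun n => u n (P n), fun n => ⟨huK n _, by simpa only [← hP] using hu n (P n)⟩⟩

lemma tsum_half_pow_smul_eq_sum_add [CompleteSpace X] {v : ℕ → X} {M : ℝ}
    (hv : ∀ j, ‖v j‖ ≤ M) (n : ℕ) :
    ∑' j, (2⁻¹ : ℝ) ^ (j + 1) • v j = ∑ j ∈ Finset.range n, (2⁻¹ : ℝ) ^ (j + 1) • v j +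
      (2⁻¹ : ℝ) ^ n • ∑' j, (2⁻¹ : ℝ) ^ (j + 1) • v (j + n) := by
  rw [← tsum_const_smul'', ← (isTailWeights_half_pow.summable_smul hv).sum_add_tsum_nat_add n]
  congr 1
  refine tsum_congr fun j => ?_
  rw [smul_smul, ← pow_add, add_right_comm, add_comm n]

lemma le_of_le_half_add_quarter_pow {a : ℕ → ℝ} {A ε : ℝ} (h0 : a 0 = 0)
    (h : ∀ n, a (n + 1) ≤ a n / 2 + A / 2 + ε * 4⁻¹ ^ (n + 1)) (n : ℕ) :
    a n ≤ (1 - 2⁻¹ ^ n) * A + ε * (2⁻¹ ^ n - 4⁻¹ ^ n) := by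
  induction n with
  | zero => simp [h0]
  | succ n ih =>
    have hn := h n
    simp only [pow_succ] at hn ⊢
    linarith

lemma sub_le_apply_of_eq_add_smul {b : X →L[ℝ] ℝ} (hb : ‖b‖ ≤ 1) {z P Q : X} {t ε : ℝ}
    (ht : 0 < t) (hz : z = P + t • Q) (hbz : b z = ‖z‖) (hP : ‖P‖ ≤ (1 - t) * ‖z‖ + ε * t) :
    ‖z‖ - ε ≤ b Q := by
  have hbP := apply_le_norm_of_opNorm_le_one hb P
  have : b z = b P + t * b Q := by rw [hz, map_add, map_smul, smul_eq_mul]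
  refine le_of_mul_le_mul_left ?_ ht
  nlinarith

theorem exists_forall_norming_exists_mem_ge [CompleteSpace X] {K : ℕ → Set X} {M ε : ℝ}
    (hε : 0 < ε) (hanti : Antitone K) (hne : ∀ n, (K n).Nonempty)
    (hconv : ∀ n, Convex ℝ (K n)) (hbdd : ∀ z ∈ K 0, ‖z‖ ≤ M)
    (hσ : ∀ n (v : ℕ → X), (∀ j, v j ∈ K n) → ∑' j, (2⁻¹ : ℝ) ^ (j + 1) • v j ∈ K n) :
    ∃ z₀ ∈ K 0, ∀ b : X →L[ℝ] ℝ, ‖b‖ ≤ 1 → b z₀ = ‖z₀‖ → ∀ n, ∃ z ∈ K n, ‖z₀‖ - ε ≤ b z := by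
  set W : ℕ → ℝ := fun j => (2⁻¹ : ℝ) ^ (j + 1)
  obtain ⟨v, hv⟩ := exists_seq_forall_norm_add_smul_le hne W
    (η := fun n => ε * 4⁻¹ ^ (n + 1)) fun n => by positivity
  set P : ℕ → X := fun n => ∑ j ∈ Finset.range n, W j • v j
  set Q : ℕ → X := fun m => ∑' j, W j • v (j + m)
  have hvM : ∀ j, ‖v j‖ ≤ M := fun j => hbdd _ (hanti (Nat.zero_le j) (hv j).1)
  have hQK : ∀ m, Q m ∈ K m := fun m => hσ m _ fun j => hanti (Nat.le_add_left m j) (hv _).1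
  have hsplit : ∀ n, Q 0 = P n + (2⁻¹ : ℝ) ^ n • Q n := fun n => by
    simpa only [Q, add_zero] using tsum_half_pow_smul_eq_sum_add hvM n
  -- `v n` was chosen nearly norm-minimizing, and the midpoint of `v n` and `Q (n + 1)` competes.
  have hrec : ∀ n, ‖P (n + 1)‖ ≤ ‖P n‖ / 2 + ‖Q 0‖ / 2 + ε * 4⁻¹ ^ (n + 1) := by
    intro n
    have hmid : (2⁻¹ : ℝ) • v n + (2⁻¹ : ℝ) • Q (n + 1) ∈ K n :=
      hconv n (hv n).1 (hanti n.le_succ (hQK _)) (by norm_num) (by norm_num) (by norm_num)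
    have hcomb : P n + W n • ((2⁻¹ : ℝ) • v n + (2⁻¹ : ℝ) • Q (n + 1)) =
        (2⁻¹ : ℝ) • (P n + Q 0) := by
      rw [hsplit (n + 1), show P (n + 1) = P n + W n • v n from Finset.sum_range_succ _ _]
      simp only [W, pow_succ]
      module
    calc ‖P (n + 1)‖ ≤ ‖(2⁻¹ : ℝ) • (P n + Q 0)‖ + ε * 4⁻¹ ^ (n + 1) := by
          simpa only [P, Finset.sum_range_succ, hcomb] using (hv n).2 _ hmid
      _ ≤ ‖P n‖ / 2 + ‖Q 0‖ / 2 + ε * 4⁻¹ ^ (n + 1) := by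
          rw [norm_smul, Real.norm_of_nonneg (by norm_num)]
          linarith [norm_add_le (P n) (Q 0)]
  have hP := le_of_le_half_add_quarter_pow (a := fun n => ‖P n‖) (by simp [P]) hrec
  refine ⟨Q 0, hQK 0, fun b hb hbQ n => ⟨Q n, hQK n, ?_⟩⟩
  refine sub_le_apply_of_eq_add_smul hb (by positivity) (hsplit n) hbQ ((hP n).trans ?_)
  nlinarith [pow_nonneg (by norm_num : (0 : ℝ) ≤ 4⁻¹) n]

section Simons

variable {y : ℕ → X} {M : ℝ}

lemma isBoundedUnder_le_apply (f : X →L[ℝ] ℝ) (hy : ∀ k, ‖y k‖ ≤ M) (l : Filter ℕ) :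
    l.IsBoundedUnder (· ≤ ·) fun k => f (y k) :=
  isBoundedUnder_of ⟨‖f‖ * M, fun k => (le_abs_self _).trans (abs_apply_le_opNorm_mul f hy k)⟩

lemma isCoboundedUnder_le_apply (f : X →L[ℝ] ℝ) (hy : ∀ k, ‖y k‖ ≤ M) (l : Filter ℕ)
    [l.NeBot] : l.IsCoboundedUnder (· ≤ ·) fun k => f (y k) :=
  isCoboundedUnder_le_of_le l fun k => neg_le_of_abs_le (abs_apply_le_opNorm_mul f hy k)

variable [CompleteSpace X]

lemma le_limsup_of_forall_exists_mem_tailHull (hy : ∀ k, ‖y k‖ ≤ M) (f : X →L[ℝ] ℝ) {S : ℝ}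
    (hS : ∀ n, ∃ z ∈ tailHull y n, S ≤ f z) : S ≤ limsup (fun k => f (y k)) atTop := by
  refine le_of_forall_pos_le_add fun δ hδ => ?_
  have hfreq : ∃ᶠ k in atTop, S - δ ≤ f (y k) := by
    refine frequently_atTop.2 fun n => ?_
    by_contra! h
    obtain ⟨z, hz, hSz⟩ := hS n
    linarith [apply_le_of_mem_tailHull hy f (fun k hk => (h k hk).le) hz]
  linarith [le_limsup_of_frequently_le hfreq (isBoundedUnder_le_apply f hy atTop)]

theorem exists_mem_boundary_le_limsup (hy : ∀ k, ‖y k‖ ≤ M) {B : Set (X →L[ℝ] ℝ)}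
    (hB : IsBoundary B) {d ε : ℝ} (hε : 0 < ε) (hd : ∀ z ∈ tailHull y 0, d ≤ ‖z‖) :
    ∃ b ∈ B, d - ε ≤ limsup (fun k => b (y k)) atTop := by
  obtain ⟨z₀, hz₀, hnorming⟩ := exists_forall_norming_exists_mem_ge hε (tailHull_antitone y)
    (fun n => ⟨_, self_mem_tailHull y n⟩) (convex_tailHull hy)
    (fun _ hz => norm_le_of_mem_tailHull hy hz)
    (fun _ _ hv => tsum_smul_mem_tailHull hy isTailWeights_half_pow hv)
  obtain ⟨b, hbB, hbz⟩ := hB.2 z₀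
  refine ⟨b, hbB, le_limsup_of_forall_exists_mem_tailHull hy b fun n => ?_⟩
  obtain ⟨z, hz, hle⟩ := hnorming b (hB.1 b hbB).le hbz n
  exact ⟨z, hz, by linarith [hd z₀ hz₀]⟩

lemma exists_mem_boundary_limsup_le (hy : ∀ k, ‖y k‖ ≤ M) {B : Set (X →L[ℝ] ℝ)}
    (hB : IsBoundary B) {f : X →L[ℝ] ℝ} (hf : ‖f‖ ≤ 1) {ε : ℝ} (hε : 0 < ε) :
    ∃ b ∈ B, limsup (fun k => f (y k)) atTop ≤ limsup (fun k => b (y k)) atTop + ε := by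
  set L := limsup (fun k => f (y k)) atTop
  obtain ⟨φ, hφ, hφL⟩ := extraction_of_frequently_atTop <|
    frequently_lt_of_lt_limsup (isCoboundedUnder_le_apply f hy atTop)
      (by linarith : L - ε / 2 < L)
  have hyφ : ∀ k, ‖y (φ k)‖ ≤ M := fun k => hy (φ k)
  have hd : ∀ z ∈ tailHull (y ∘ φ) 0, L - ε / 2 ≤ ‖z‖ := fun z hz => by
    have hfz := apply_le_of_mem_tailHull hyφ (-f) (S := -(L - ε / 2))
      (fun k _ => by simp only [neg_apply]; linarith [hφL k]) hz
    have hnorm := apply_le_norm_of_opNorm_le_one hf z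
    simp only [neg_apply] at hfz
    linarith
  obtain ⟨b, hbB, hb⟩ := exists_mem_boundary_le_limsup hyφ hB (half_pos hε) hd
  have hsub : limsup (fun k => b (y (φ k))) atTop ≤ limsup (fun k => b (y k)) atTop :=
    hφ.tendsto_atTop.limsup_comp_le_limsup (isCoboundedUnder_le_apply b hy _)
      (isBoundedUnder_le_apply b hy atTop)
  exact ⟨b, hbB, by linarith⟩

end Simons

theorem stmt11 [CompleteSpace X] (B : Set (X →L[ℝ] ℝ)) (hB : IsBoundary B)
    (x : ℕ → X) (hx : BoundedSeq x) :
    sSup {r : ℝ | ∃ b ∈ B, r = Filter.limsup (fun n => b (x n)) Filter.atTop}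
      = sSup {r : ℝ | ∃ f : X →L[ℝ] ℝ, ‖f‖ ≤ 1 ∧
          r = Filter.limsup (fun n => f (x n)) Filter.atTop} := by
  obtain ⟨M, hM⟩ := hx
  set A := {r : ℝ | ∃ b ∈ B, r = limsup (fun n => b (x n)) atTop}
  set D := {r : ℝ | ∃ f : X →L[ℝ] ℝ, ‖f‖ ≤ 1 ∧ r = limsup (fun n => f (x n)) atTop}
  have hD : BddAbove D := ⟨M, fun _ ⟨f, hf, hr⟩ => hr ▸ limsup_le_of_le
    (isCoboundedUnder_le_apply f hM atTop)
    (Eventually.of_forall fun n => (apply_le_norm_of_opNorm_le_one hf (x n)).trans (hM n))⟩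
  have hAD : A ⊆ D := fun _ ⟨b, hbB, hr⟩ => ⟨b, (hB.1 b hbB).le, hr⟩
  have hA : A.Nonempty := let ⟨b, hbB, _⟩ := hB.2 0; ⟨_, b, hbB, rfl⟩
  refine le_antisymm (csSup_le_csSup hD hA hAD) (csSup_le (hA.mono hAD) ?_)
  rintro _ ⟨f, hf, rfl⟩
  refine le_of_forall_pos_le_add fun ε hε => ?_
  obtain ⟨b, hbB, hb⟩ := exists_mem_boundary_limsup_le hM hB hf hε
  exact hb.trans (add_le_add_left (le_csSup (hD.mono hAD) ⟨b, hbB, rfl⟩) ε)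
end
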